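/- For every integer n ≥ 1, the Lebesgue volume of the set {x ∈ [0,1]^n : for every subset S ⊆ {1,…,n} of odd cardinality, Σ_{i∉S} x_i − Σ_{i∈S} x_i ≤ n − |S| − 1} equals 1 − 2^{n−1}/n!. (This set is the demicube obtained from the n-cycle local polytope slice at symmetric marginal t = 1/2, after rescaling by t.) -/

import Mathlib

/-!
Inside the unit cube, the constraint for an odd set `S` cuts off exactly the corner at the vertex
`𝟙_{Sᶜ}`, i.e. the points at `ℓ¹`-distance less than `1` from it, a simplex of volume `1 / n!`.
Two distinct odd sets differ in at least two coordinates, so their vertices are at `ℓ¹`-distance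
at least `2` and the corners are disjoint. There are `2 ^ (n - 1)` odd sets.
-/

open MeasureTheory Finset
open scoped symmDiff

def cornerSimplex (ι : Type*) [Fintype ι] (t : ℝ) : Set (ι → ℝ) :=
  {y | (∀ i, 0 ≤ y i) ∧ ∑ i, y i < t}

lemma measurableSet_cornerSimplex (ι : Type*) [Fintype ι] (t : ℝ) :
    MeasurableSet (cornerSimplex ι t) := by
  unfold cornerSimplex; measurability

lemma cornerSimplex_eq_empty {ι : Type*} [Fintype ι] {t : ℝ} (ht : t ≤ 0) :
    cornerSimplex ι t = ∅ :=
  Set.eq_empty_of_forall_notMem fun _ ⟨hy, hsum⟩ =>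
    (hsum.trans_le ht).not_ge (sum_nonneg fun i _ => hy i)

lemma lintegral_Ico_sub_pow_div_factorial (n : ℕ) {t : ℝ} (ht : 0 ≤ t) :
    ∫⁻ a in Set.Ico 0 t, ENNReal.ofReal ((t - a) ^ n / n.factorial) =
      ENNReal.ofReal (t ^ (n + 1) / (n + 1).factorial) := by
  have hnonneg : 0 ≤ᵐ[volume.restrict (Set.Ioc 0 t)] fun a => (t - a) ^ n / n.factorial :=
    (ae_restrict_mem measurableSet_Ioc).mono fun a ha => by
      have := sub_nonneg.2 ha.2; positivity
  rw [setLIntegral_congr Ico_ae_eq_Ioc, ← ofReal_integral_eq_lintegral_ofReal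
    (by fun_prop : Continuous fun a : ℝ => (t - a) ^ n / n.factorial).integrableOn_Ioc hnonneg,
    ← intervalIntegral.integral_of_le ht, intervalIntegral.integral_div,
    intervalIntegral.integral_comp_sub_left (fun a => a ^ n), integral_pow, Nat.factorial_succ]
  simp [div_div, mul_comm]

lemma volume_cornerSimplex_fin (n : ℕ) {t : ℝ} (ht : 0 < t) :
    volume (cornerSimplex (Fin n) t) = ENNReal.ofReal (t ^ n / n.factorial) := by
  induction n generalizing t with
  | zero =>
    have : cornerSimplex (Fin 0) t = Set.univ := by
      ext y; simp [cornerSimplex, ht]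
    simp [this, volume_pi]
  | succ n ih =>
    set A : Set (ℝ × (Fin n → ℝ)) := {p | 0 ≤ p.1 ∧ p.2 ∈ cornerSimplex (Fin n) (t - p.1)}
      with hA
    have hAm : MeasurableSet A := by simp only [hA, cornerSimplex]; measurability
    have hpre : cornerSimplex (Fin (n + 1)) t =
        MeasurableEquiv.piFinSuccAbove (fun _ => ℝ) 0 ⁻¹' A := by
      ext y
      simp [cornerSimplex, hA, Fin.forall_fin_succ, Fin.sum_univ_succ, Fin.tail, and_assoc,
        lt_sub_iff_add_lt']
    have hslice (a : ℝ) : volume (Prod.mk a ⁻¹' A) =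
        (Set.Ico 0 t).indicator (fun a => ENNReal.ofReal ((t - a) ^ n / n.factorial)) a := by
      by_cases ha : a ∈ Set.Ico 0 t
      · have : Prod.mk a ⁻¹' A = cornerSimplex (Fin n) (t - a) := by
          ext y; simp [hA, ha.1]
        rw [this, ih (sub_pos.2 ha.2), Set.indicator_of_mem ha]
      · have : Prod.mk a ⁻¹' A = ∅ := by
          rcases not_and_or.1 ha with ha | ha
          · ext y; simp [hA, ha]
          · ext y; simp [hA, cornerSimplex_eq_empty (sub_nonpos.2 (not_lt.1 ha))]
        rw [this, Set.indicator_of_notMem ha, measure_empty]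
    rw [hpre, (volume_preserving_piFinSuccAbove (fun _ => ℝ) 0).measure_preimage_equiv,
      Measure.volume_eq_prod, Measure.prod_apply hAm]
    simp_rw [hslice]
    rw [lintegral_indicator measurableSet_Ico, lintegral_Ico_sub_pow_div_factorial n ht.le]

lemma cornerSimplex_eq_preimage_piCongrLeft {ι κ : Type*} [Fintype ι] [Fintype κ] (e : κ ≃ ι)
    (t : ℝ) : cornerSimplex κ t =
      MeasurableEquiv.piCongrLeft (fun _ => ℝ) e ⁻¹' cornerSimplex ι t := by
  ext y
  simp only [cornerSimplex, Set.mem_preimage, Set.mem_ofPred_eq, ← e.forall_congr_right,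
    ← e.sum_comp, MeasurableEquiv.piCongrLeft_apply_apply]

lemma volume_cornerSimplex (ι : Type*) [Fintype ι] {t : ℝ} (ht : 0 < t) :
    volume (cornerSimplex ι t) =
      ENNReal.ofReal (t ^ Fintype.card ι / (Fintype.card ι).factorial) := by
  rw [← volume_cornerSimplex_fin _ ht,
    cornerSimplex_eq_preimage_piCongrLeft (Fintype.equivFin ι).symm]
  exact ((volume_measurePreserving_piCongrLeft _ _).measure_preimage_equiv _).symm

lemma two_le_card_symmDiff_of_odd {α : Type*} [DecidableEq α] {S T : Finset α} (hS : Odd #S)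
    (hT : Odd #T) (hST : S ≠ T) : 2 ≤ #(S ∆ T) := by
  have hcard : #(S ∆ T) = #(S \ T) + #(T \ S) := card_union_of_disjoint disjoint_sdiff_sdiff
  have hS' := card_sdiff_add_card_inter S T
  have hT' := card_sdiff_add_card_inter T S
  have hpos : 0 < #(S ∆ T) := card_pos.2 (symmDiff_nonempty.2 hST)
  rw [inter_comm] at hT'
  obtain ⟨a, ha⟩ := hS
  obtain ⟨b, hb⟩ := hT
  omega

lemma card_powerset_filter_odd {α : Type*} {s : Finset α} (hs : s.Nonempty) :
    #{t ∈ s.powerset | Odd #t} = 2 ^ (#s - 1) := by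
  have hsign (k : ℕ) : (-1 : ℤ) ^ k = 1 - 2 * if Odd k then 1 else 0 := by
    rcases Nat.even_or_odd k with hk | hk
    · simp [hk.neg_one_pow, Nat.not_odd_iff_even.2 hk]
    · norm_num [hk.neg_one_pow, hk]
  have h := sum_powerset_neg_one_pow_card_of_nonempty hs
  simp only [hsign, sum_sub_distrib, ← mul_sum, sum_boole, sum_const, card_powerset,
    nsmul_eq_mul, mul_one, Nat.cast_pow, Nat.cast_ofNat] at h
  have hpow : (2 : ℤ) ^ #s = 2 * 2 ^ (#s - 1) := by
    rw [← pow_succ', Nat.sub_add_cancel hs.card_pos]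
  exact_mod_cast (by linarith : (#{t ∈ s.powerset | Odd #t} : ℤ) = 2 ^ (#s - 1))

section Corners

variable {ι : Type*} [DecidableEq ι]

lemma piecewise_one_sub_apply_mem_Icc_iff (S : Finset ι) (x : ι → ℝ) (i : ι) :
    S.piecewise x (1 - x) i ∈ Set.Icc 0 1 ↔ x i ∈ Set.Icc 0 1 := by
  by_cases hi : i ∈ S
  · simp [hi]
  · simp [hi, and_comm]

variable [Fintype ι]

lemma measurePreserving_piecewise_one_sub (S : Finset ι) :
    MeasurePreserving (fun x : ι → ℝ => S.piecewise x (1 - x)) :=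
  volume_preserving_pi (f := fun i (a : ℝ) => if i ∈ S then a else 1 - a) fun i => by
    split_ifs
    exacts [MeasurePreserving.id volume, Measure.measurePreserving_sub_left volume 1]

/-- `x ↦ S.piecewise x (1 - x)` is the symmetry of the cube taking the vertex `𝟙_{Sᶜ}` to `0`,
so this is the set of points of the cube at `ℓ¹`-distance less than `1` from `𝟙_{Sᶜ}`. -/
def cubeCorner (S : Finset ι) : Set (ι → ℝ) :=
  (fun x => S.piecewise x (1 - x)) ⁻¹' cornerSimplex ι 1

lemma measurableSet_cubeCorner (S : Finset ι) : MeasurableSet (cubeCorner S) :=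
  (measurePreserving_piecewise_one_sub S).measurable (measurableSet_cornerSimplex ι 1)

lemma volume_cubeCorner (S : Finset ι) :
    volume (cubeCorner S) = ENNReal.ofReal (1 / (Fintype.card ι).factorial) := by
  rw [cubeCorner, (measurePreserving_piecewise_one_sub S).measure_preimage
    (measurableSet_cornerSimplex ι 1).nullMeasurableSet, volume_cornerSimplex ι one_pos, one_pow]

lemma cubeCorner_subset_Icc (S : Finset ι) : cubeCorner S ⊆ Set.Icc 0 1 := by
  rintro x ⟨hnonneg, hsum⟩
  have hx (i : ι) : x i ∈ Set.Icc 0 1 := (piecewise_one_sub_apply_mem_Icc_iff S x i).1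
    ⟨hnonneg i, (single_le_sum (fun j _ => hnonneg j) (mem_univ i)).trans hsum.le⟩
  exact ⟨fun i => (hx i).1, fun i => (hx i).2⟩

lemma sum_piecewise_one_sub (S : Finset ι) (x : ι → ℝ) :
    ∑ i, S.piecewise x (1 - x) i = ∑ i ∈ S, x i + (#Sᶜ - ∑ i ∈ Sᶜ, x i) := by
  simp [sum_piecewise, sum_sub_distrib, compl_eq_univ_sdiff]

lemma mem_cubeCorner_iff {S : Finset ι} {x : ι → ℝ} (hx : x ∈ Set.Icc 0 1) :
    x ∈ cubeCorner S ↔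
      (Fintype.card ι : ℝ) - #S - 1 < (∑ i ∈ Sᶜ, x i) - ∑ i ∈ S, x i := by
  have hnonneg (i : ι) : 0 ≤ S.piecewise x (1 - x) i :=
    ((piecewise_one_sub_apply_mem_Icc_iff S x i).2 ⟨hx.1 i, hx.2 i⟩).1
  simp only [cubeCorner, cornerSimplex, Set.mem_preimage, Set.mem_ofPred_eq, hnonneg,
    implies_true, true_and, sum_piecewise_one_sub, card_compl]
  rw [Nat.cast_sub (card_le_univ S)]
  constructor <;> intro h <;> linarith

lemma disjoint_cubeCorner {S T : Finset ι} (h : 2 ≤ #(S ∆ T)) :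
    Disjoint (cubeCorner S) (cubeCorner T) := by
  refine Set.disjoint_left.2 fun x ⟨hS, hS'⟩ ⟨hT, hT'⟩ => ?_
  have hsum : (#(S ∆ T) : ℝ) ≤ ∑ i, (S.piecewise x (1 - x) i + T.piecewise x (1 - x) i) :=
    calc (#(S ∆ T) : ℝ)
        = ∑ i ∈ S ∆ T, (S.piecewise x (1 - x) i + T.piecewise x (1 - x) i) := by
          rw [card_eq_sum_ones, Nat.cast_sum]
          refine sum_congr rfl fun i hi => ?_
          rcases mem_symmDiff.1 hi with ⟨hiS, hiT⟩ | ⟨hiT, hiS⟩ <;> simp [hiS, hiT]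
      _ ≤ _ := sum_le_sum_of_subset_of_nonneg (subset_univ _) fun i _ _ =>
          add_nonneg (hS i) (hT i)
  rw [sum_add_distrib] at hsum
  have : (2 : ℝ) ≤ #(S ∆ T) := by exact_mod_cast h
  linarith

lemma volume_biUnion_cubeCorner_odd [Nonempty ι] :
    volume (⋃ S ∈ ({S | Odd #S} : Finset (Finset ι)), cubeCorner S) =
      ENNReal.ofReal (2 ^ (Fintype.card ι - 1) / (Fintype.card ι).factorial) := by
  have hcard : #({S | Odd #S} : Finset (Finset ι)) = 2 ^ (Fintype.card ι - 1) := by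
    simpa using card_powerset_filter_odd (univ_nonempty (α := ι))
  rw [measure_biUnion_finset (fun S hS T hT hST => disjoint_cubeCorner
      (two_le_card_symmDiff_of_odd (mem_filter.1 hS).2 (mem_filter.1 hT).2 hST))
      fun S _ => measurableSet_cubeCorner S,
    sum_congr rfl fun S _ => volume_cubeCorner S, sum_const, hcard, nsmul_eq_mul,
    ← ENNReal.ofReal_natCast, ← ENNReal.ofReal_mul (by positivity)]
  simp [div_eq_mul_inv]

end Corners

/-- The demicube obtained from the `n`-cycle local polytope slice at symmetric marginal
`t = 1/2` (after rescaling by `t`) has volume `1 - 2^(n-1)/n!`. -/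
theorem stmt11 (n : ℕ) (hn : 1 ≤ n) :
    volume {x : Fin n → ℝ |
        (∀ i, 0 ≤ x i ∧ x i ≤ 1) ∧
        ∀ S : Finset (Fin n), Odd S.card →
          (∑ i ∈ Sᶜ, x i) - ∑ i ∈ S, x i ≤ (n : ℝ) - S.card - 1} =
      ENNReal.ofReal (1 - 2 ^ (n - 1) / n.factorial) := by
  classical
  have : Nonempty (Fin n) := Fin.pos_iff_nonempty.1 hn
  have hset : {x : Fin n → ℝ | (∀ i, 0 ≤ x i ∧ x i ≤ 1) ∧ ∀ S : Finset (Fin n), Odd S.card →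
      (∑ i ∈ Sᶜ, x i) - ∑ i ∈ S, x i ≤ (n : ℝ) - S.card - 1} =
      Set.Icc 0 1 \ ⋃ S ∈ ({S | Odd #S} : Finset (Finset (Fin n))), cubeCorner S := by
    ext x
    have hcube : x ∈ Set.Icc 0 1 ↔ ∀ i, 0 ≤ x i ∧ x i ≤ 1 := by simp [Pi.le_def, forall_and]
    simp only [Set.mem_ofPred_eq, Set.mem_sdiff, Set.mem_iUnion₂, mem_filter, mem_univ, true_and,
      not_exists, ← hcube]
    refine and_congr_right fun hx => forall_congr' fun S => imp_congr_right fun _ => ?_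
    rw [mem_cubeCorner_iff hx, Fintype.card_fin, not_lt]
  rw [hset, measure_sdiff (Set.iUnion₂_subset fun S _ => cubeCorner_subset_Icc S)
      (Finset.measurableSet_biUnion _ fun S _ => measurableSet_cubeCorner S).nullMeasurableSet
      (by rw [volume_biUnion_cubeCorner_odd]; exact ENNReal.ofReal_ne_top),
    volume_biUnion_cubeCorner_odd, Real.volume_Icc_pi, ENNReal.ofReal_sub _ (by positivity)]
  simp
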